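/- arXiv:2206.11359 — 2 statements merged into one kernel-verified Lean document; each statement's English description precedes it below -/
import Mathlib

section
/- Fix agent i with true preferences o_{m₁} ≻_i … ≻_i o_{m_M} and k* = min{k : Σ_{k'=1}^{k} q_{m_{k'}} ≥ N}. If all other agents report the same preferences as ≻_i, then there exists a rank-minimizing allocation assigning agent i the object o_{m_{k*}}, of rank k*. Hence agent i's worst-case rank under truthful reporting equals exactly k*. -/
open Finset

/-- A strict preference over `M` objects, encoded as a bijection sending each
object to its 0-based rank position (position 0 = favorite). -/
abbrev Pref (M : ℕ) := Fin M ≃ Fin M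

/-- The (1-based) rank of object `o` under preference `p`: the favorite object
has rank 1, the second favorite rank 2, etc. -/
def rank {M : ℕ} (p : Pref M) (o : Fin M) : ℕ := (p o : ℕ) + 1

/-- `α : Fin N → Fin M` is a capacity-respecting allocation for capacities `q`. -/
def IsAlloc {N M : ℕ} (q : Fin M → ℕ) (α : Fin N → Fin M) : Prop :=
  ∀ o : Fin M, (univ.filter (fun i => α i = o)).card ≤ q o

/-- The total (summed) rank of allocation `α` at preference profile `pref`. -/
def totalRank {N M : ℕ} (pref : Fin N → Pref M) (α : Fin N → Fin M) : ℕ :=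
  ∑ i, rank (pref i) (α i)

/-- The average rank of allocation `α` at preference profile `pref`. -/
def avgRank {N M : ℕ} (pref : Fin N → Pref M) (α : Fin N → Fin M) : ℚ :=
  (totalRank pref α : ℚ) / N

/-- The rank-minimizing mechanism: the set of all capacity-respecting
allocations minimizing the average rank at the reported profile. -/
def RM {N M : ℕ} (q : Fin M → ℕ) (pref : Fin N → Pref M) : Set (Fin N → Fin M) :=
  {α | IsAlloc q α ∧ ∀ β : Fin N → Fin M, IsAlloc q β → avgRank pref α ≤ avgRank pref β}

/-- Total capacity of the `k` most-preferred objects under preference `p`. -/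
def topCap {M : ℕ} (q : Fin M → ℕ) (p : Pref M) (k : ℕ) : ℕ :=
  ∑ o ∈ univ.filter (fun o => (p o : ℕ) < k), q o

/-- Worst-case (true) rank of agent `i` (with true preference `truth`) when she
reports `report`, over all counterpart profiles and all allocations returned by
the rank-minimizing mechanism. -/
noncomputable def worstCase {N M : ℕ} (q : Fin M → ℕ) (i : Fin N)
    (truth report : Pref M) : ℕ :=
  sSup {r | ∃ pref : Fin N → Pref M, pref i = report ∧
    ∃ α ∈ RM q pref, r = rank truth (α i)}

/-- Best-case (true) rank of agent `i` (with true preference `truth`) when she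
reports `report`, over all counterpart profiles and all allocations returned by
the rank-minimizing mechanism. -/
noncomputable def bestCase {N M : ℕ} (q : Fin M → ℕ) (i : Fin N)
    (truth report : Pref M) : ℕ :=
  sInf {r | ∃ pref : Fin N → Pref M, pref i = report ∧
    ∃ α ∈ RM q pref, r = rank truth (α i)}

section Aux
variable {M : ℕ} (q : Fin M → ℕ) (p : Pref M)

lemma topCap_mono : Monotone (topCap q p) := by
  intro a b hab
  apply Finset.sum_le_sum_of_subset
  intro o ho
  simp only [mem_filter, mem_univ, true_and] at ho ⊢
  omega

lemma topCap_total : topCap q p M = ∑ o, q o := by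
  unfold topCap
  rw [Finset.filter_true_of_mem]
  intro o _; exact (p o).isLt

lemma topCap_succ (k : ℕ) (hk : k < M) :
    topCap q p (k + 1) = topCap q p k + q (p.symm ⟨k, hk⟩) := by
  unfold topCap
  have h : (univ.filter (fun o => (p o : ℕ) < k + 1))
      = insert (p.symm ⟨k, hk⟩) (univ.filter (fun o => (p o : ℕ) < k)) := by
    ext o
    simp only [mem_filter, mem_univ, true_and, mem_insert, Equiv.eq_symm_apply]
    constructor
    · intro h
      rcases Nat.lt_succ_iff_lt_or_eq.mp h with h | h
      · exact Or.inr h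
      · exact Or.inl (Fin.ext h)
    · rintro (h | h)
      · simp [h]
      · omega
  rw [h, Finset.sum_insert, Nat.add_comm]
  simp only [mem_filter, mem_univ, true_and, Equiv.apply_symm_apply]
  omega

/-- Index of the object (by rank) a "position" j gets under greedy filling. -/
noncomputable def fidx (j : ℕ) : ℕ := sInf {k | j < topCap q p (k + 1)}

variable {q p} {j : ℕ} (hj : j < ∑ o, q o)

include hj in
lemma fidx_ne : {k | j < topCap q p (k + 1)}.Nonempty := by
  have hM : 1 ≤ M := by
    by_contra h
    interval_cases M
    simp at hj
  exact ⟨M - 1, by simpa [Nat.sub_add_cancel hM, topCap_total] using hj⟩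

include hj in
lemma fidx_spec : j < topCap q p (fidx q p j + 1) := Nat.sInf_mem (fidx_ne hj)

include hj in
lemma fidx_le_iff {k : ℕ} : fidx q p j ≤ k ↔ j < topCap q p (k + 1) := by
  constructor
  · intro h
    exact lt_of_lt_of_le (fidx_spec hj) (topCap_mono q p (by omega))
  · intro h
    exact Nat.sInf_le h

include hj in
lemma fidx_lt : fidx q p j < M := by
  have hM : 1 ≤ M := by
    by_contra h
    interval_cases M
    simp at hj
  have : fidx q p j ≤ M - 1 := (fidx_le_iff hj).mpr
    (by simpa [Nat.sub_add_cancel hM, topCap_total] using hj)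
  omega

include hj in
lemma fidx_low : topCap q p (fidx q p j) ≤ j := by
  cases h : fidx q p j with
  | zero => simp [topCap]
  | succ m =>
    by_contra hc
    have h2 : fidx q p j ≤ m := Nat.sInf_le (show j < topCap q p (m + 1) by omega)
    omega

end Aux

section Count

lemma card_filter_lt_val {N c : ℕ} :
    ((univ : Finset (Fin N)).filter (fun j : Fin N => (j : ℕ) < c)).card = min c N := by
  have h : (univ : Finset (Fin N)).filter (fun j : Fin N => (j : ℕ) < c)
      = Finset.attachFin (n := N) (Finset.range (min c N)) (fun m hm => by
          simp only [Finset.mem_range] at hm; omega) := by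
    ext j
    simp only [mem_filter, mem_univ, true_and, Finset.mem_attachFin, Finset.mem_range]
    omega
  rw [h, Finset.card_attachFin, Finset.card_range]

lemma sum_layers {N : ℕ} (M : ℕ) (g : Fin N → ℕ) (hg : ∀ j, g j < M) :
    ∑ j, g j = ∑ k ∈ Finset.range M, (N - (univ.filter (fun j => g j ≤ k)).card) := by
  have h1 : ∀ j : Fin N, g j = ((Finset.range M).filter (fun k => ¬ g j ≤ k)).card := by
    intro j
    have hj := hg j
    have h2 : (Finset.range M).filter (fun k => ¬ g j ≤ k) = Finset.range (g j) := by
      ext k; simp only [mem_filter, Finset.mem_range, not_le]; omega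
    rw [h2, Finset.card_range]
  calc ∑ j, g j = ∑ j : Fin N, ((Finset.range M).filter (fun k => ¬ g j ≤ k)).card :=
        Finset.sum_congr rfl fun j _ => h1 j
    _ = ∑ k ∈ Finset.range M, (univ.filter (fun j : Fin N => ¬ g j ≤ k)).card := by
        simp_rw [Finset.card_filter]
        rw [Finset.sum_comm]
    _ = _ := by
        refine Finset.sum_congr rfl fun k _ => ?_
        have h3 := Finset.card_filter_add_card_filter_not
          (s := (univ : Finset (Fin N))) (p := fun j => g j ≤ k)
        simp only [Finset.card_univ, Fintype.card_fin] at h3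
        omega

lemma card_le_topCap {N M : ℕ} (q : Fin M → ℕ) (p : Pref M) (β : Fin N → Fin M)
    (hβ : IsAlloc q β) (k : ℕ) :
    (univ.filter (fun j => (p (β j) : ℕ) ≤ k)).card ≤ topCap q p (k + 1) := by
  rw [Finset.card_eq_sum_card_fiberwise (f := β)
    (t := univ.filter (fun o => (p o : ℕ) < k + 1))
    (fun j hj => by simp only [Finset.mem_coe, mem_filter, mem_univ, true_and] at hj ⊢; omega)]
  apply Finset.sum_le_sum
  intro o _
  refine le_trans (Finset.card_le_card ?_) (hβ o)
  intro j hj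
  simp only [mem_filter, mem_univ, true_and] at hj ⊢
  exact hj.2

lemma filter_equiv_card {N : ℕ} (e : Fin N ≃ Fin N) (pr : Fin N → Prop) [DecidablePred pr] :
    (univ.filter (fun j => pr (e j))).card = (univ.filter pr).card := by
  apply Finset.card_bij (fun a _ => e a)
  · intro a ha; simp only [mem_filter, mem_univ, true_and] at ha ⊢; exact ha
  · intro a _ b _ hab; exact e.injective hab
  · intro b hb
    refine ⟨e.symm b, ?_, by simp⟩
    simp only [mem_filter, mem_univ, true_and, Equiv.apply_symm_apply] at hb ⊢
    exact hb

end Count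

lemma fidx_eq_iff {N M : ℕ} (q : Fin M → ℕ) (p : Pref M) (hq : N ≤ ∑ o, q o)
    (j : Fin N) (r : ℕ) :
    fidx q p ↑j = r ↔ topCap q p r ≤ ↑j ∧ ↑j < topCap q p (r + 1) := by
  have hj : (j : ℕ) < ∑ o, q o := lt_of_lt_of_le j.isLt hq
  constructor
  · intro h
    exact ⟨h ▸ fidx_low hj, h ▸ fidx_spec hj⟩
  · rintro ⟨h1, h2⟩
    have hle : fidx q p ↑j ≤ r := (fidx_le_iff hj).mpr h2
    have hge : r ≤ fidx q p ↑j := by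
      by_contra hlt
      push_neg at hlt
      have : topCap q p (fidx q p ↑j + 1) ≤ topCap q p r := topCap_mono q p (by omega)
      have := fidx_spec (q := q) (p := p) hj
      omega
    omega

lemma greedy_opt {N M : ℕ} (q : Fin M → ℕ) (p : Pref M) (hq : N ≤ ∑ o, q o)
    (e : Fin N ≃ Fin N) (α : Fin N → Fin M)
    (hα : ∀ j, (p (α j) : ℕ) = fidx q p ↑(e j)) :
    α ∈ RM q (fun _ => p) := by
  constructor
  · -- capacity respecting
    intro o
    have h1 : (univ.filter (fun j => α j = o))
        = univ.filter (fun j : Fin N => fidx q p ↑(e j) = (p o : ℕ)) := by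
      ext j
      simp only [mem_filter, mem_univ, true_and]
      constructor
      · intro h; rw [← hα j, h]
      · intro h
        have : p (α j) = p o := Fin.ext (by rw [hα j, h])
        exact p.injective this
    rw [h1, filter_equiv_card e (fun j => fidx q p ↑j = (p o : ℕ))]
    have h2 : (univ.filter (fun j : Fin N => fidx q p ↑j = (p o : ℕ)))
        = (univ.filter (fun j : Fin N => (j : ℕ) < topCap q p ((p o : ℕ) + 1)))
          \ (univ.filter (fun j : Fin N => (j : ℕ) < topCap q p (p o : ℕ))) := by
      ext j
      simp only [mem_sdiff, mem_filter, mem_univ, true_and, not_lt]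
      rw [fidx_eq_iff q p hq]
      tauto
    rw [h2, Finset.card_sdiff_of_subset (by
      intro j hj
      simp only [mem_filter, mem_univ, true_and] at hj ⊢
      exact lt_of_lt_of_le hj (topCap_mono q p (by omega)))]
    rw [card_filter_lt_val, card_filter_lt_val]
    have h3 : topCap q p ((p o : ℕ) + 1) = topCap q p (p o : ℕ) + q o := by
      have := topCap_succ q p (p o : ℕ) (p o).isLt
      simpa using this
    omega
  · -- optimality
    intro β hβ
    unfold avgRank
    rcases Nat.eq_zero_or_pos N with hN | hN
    · subst hN; simp [totalRank]
    have key : totalRank (fun _ => p) α ≤ totalRank (fun _ => p) β := by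
      unfold totalRank rank
      rw [Finset.sum_add_distrib, Finset.sum_add_distrib]
      apply Nat.add_le_add_right
      rw [sum_layers M (fun j => (p (α j) : ℕ)) (fun j => (p (α j)).isLt),
          sum_layers M (fun j => (p (β j) : ℕ)) (fun j => (p (β j)).isLt)]
      apply Finset.sum_le_sum
      intro k _
      apply Nat.sub_le_sub_left
      -- card of β-fiber ≤ card of α-fiber = min N (topCap (k+1))
      have hαcard : (univ.filter (fun j => (p (α j) : ℕ) ≤ k)).card
          = min (topCap q p (k + 1)) N := by
        have h1 : (univ.filter (fun j => (p (α j) : ℕ) ≤ k))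
            = univ.filter (fun j : Fin N => fidx q p ↑(e j) ≤ k) := by
          apply Finset.filter_congr
          intro j _
          rw [hα j]
        rw [h1, filter_equiv_card e (fun j => fidx q p ↑j ≤ k)]
        have h2 : (univ.filter (fun j : Fin N => fidx q p ↑j ≤ k))
            = univ.filter (fun j : Fin N => (j : ℕ) < topCap q p (k + 1)) := by
          apply Finset.filter_congr
          intro j _
          have hj : (j : ℕ) < ∑ o, q o := lt_of_lt_of_le j.isLt hq
          exact fidx_le_iff (q := q) (p := p) hj
        rw [h2, card_filter_lt_val]
      rw [hαcard]
      refine le_min (card_le_topCap q p β hβ k) ?_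
      calc (univ.filter (fun j => (p (β j) : ℕ) ≤ k)).card
          ≤ (univ : Finset (Fin N)).card := Finset.card_filter_le _ _
        _ = N := by simp
    have : (totalRank (fun _ => p) α : ℚ) ≤ (totalRank (fun _ => p) β : ℚ) :=
      Nat.cast_le.mpr key
    rw [div_eq_mul_inv, div_eq_mul_inv]
    exact mul_le_mul_of_nonneg_right this (by positivity)

/-- Exchange argument: any RM allocation at a profile where `i` reports `p`
gives `i` an object of `p`-rank at most `kstar + 1`. -/
lemma rm_rank_le {N M : ℕ} (q : Fin M → ℕ) (i : Fin N) (p : Pref M) (kstar : Fin M)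
    (hks : N ≤ topCap q p ((kstar : ℕ) + 1))
    (pref : Fin N → Pref M) (hpi : pref i = p)
    (α : Fin N → Fin M) (hRM : α ∈ RM q pref) :
    rank p (α i) ≤ (kstar : ℕ) + 1 := by
  obtain ⟨hA, hOpt⟩ := hRM
  by_contra hr
  push_neg at hr
  have hbig : (kstar : ℕ) < (p (α i) : ℕ) := by
    unfold rank at hr; omega
  have hN : 0 < N := i.pos
  -- find an object of rank ≤ kstar with spare capacity
  have hslack : ∃ o : Fin M, (p o : ℕ) ≤ (kstar : ℕ)
      ∧ (univ.filter (fun j => α j = o)).card < q o := by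
    by_contra hc
    push_neg at hc
    set T : Finset (Fin M) := univ.filter (fun o => (p o : ℕ) < (kstar : ℕ) + 1) with hT
    set s : Finset (Fin N) := univ.filter (fun j => (p (α j) : ℕ) ≤ (kstar : ℕ)) with hs
    have h1 : topCap q p ((kstar : ℕ) + 1) ≤ ∑ o ∈ T, (univ.filter (fun j => α j = o)).card := by
      apply Finset.sum_le_sum
      intro o ho
      simp only [hT, mem_filter, mem_univ, true_and] at ho
      exact hc o (by omega)
    have h2 : ∀ o ∈ T, (univ.filter (fun j => α j = o)) = s.filter (fun j => α j = o) := by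
      intro o ho
      simp only [hT, mem_filter, mem_univ, true_and] at ho
      ext j
      simp only [hs, mem_filter, mem_univ, true_and]
      constructor
      · intro h; exact ⟨by rw [h]; omega, h⟩
      · intro h; exact h.2
    have h3 : ∑ o ∈ T, (univ.filter (fun j => α j = o)).card = s.card := by
      rw [Finset.sum_congr rfl (fun o ho => by rw [h2 o ho])]
      exact (Finset.card_eq_sum_card_fiberwise (fun j hj => by
        simp only [hs, Finset.mem_coe, mem_filter, mem_univ, true_and] at hj
        simp only [hT, Finset.mem_coe, mem_filter, mem_univ, true_and]
        omega)).symm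
    have h4 : s ⊆ univ.erase i := by
      intro j hj
      simp only [hs, mem_filter, mem_univ, true_and] at hj
      simp only [Finset.mem_erase, mem_univ, and_true]
      intro hji
      rw [hji] at hj
      omega
    have h5 : s.card ≤ N - 1 := by
      calc s.card ≤ (univ.erase i).card := Finset.card_le_card h4
        _ = N - 1 := by rw [Finset.card_erase_of_mem (mem_univ i)]; simp
    omega
  obtain ⟨o, ho1, ho2⟩ := hslack
  -- exchange: move i to o
  set β := Function.update α i o with hβdef
  have hβA : IsAlloc q β := by
    intro o'
    by_cases ho' : o' = o
    · subst ho'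
      have hsub : univ.filter (fun j => β j = o') ⊆ insert i (univ.filter (fun j => α j = o')) := by
        intro j hj
        simp only [mem_filter, mem_univ, true_and] at hj
        by_cases hji : j = i
        · rw [hji]; exact Finset.mem_insert_self i _
        · apply Finset.mem_insert_of_mem
          simp only [mem_filter, mem_univ, true_and]
          rwa [hβdef, Function.update_of_ne hji] at hj
      calc (univ.filter (fun j => β j = o')).card
          ≤ (insert i (univ.filter (fun j => α j = o'))).card := Finset.card_le_card hsub
        _ ≤ (univ.filter (fun j => α j = o')).card + 1 := Finset.card_insert_le _ _
        _ ≤ q o' := by omega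
    · have hsub : univ.filter (fun j => β j = o') ⊆ univ.filter (fun j => α j = o') := by
        intro j hj
        simp only [mem_filter, mem_univ, true_and] at hj ⊢
        by_cases hji : j = i
        · exfalso; rw [hji, hβdef, Function.update_self] at hj; exact ho' hj.symm
        · rwa [hβdef, Function.update_of_ne hji] at hj
      exact le_trans (Finset.card_le_card hsub) (hA o')
  -- β strictly improves total rank
  have hlt : totalRank pref β < totalRank pref α := by
    unfold totalRank
    rw [← Finset.sum_erase_add univ _ (mem_univ i), ← Finset.sum_erase_add univ
      (fun j => rank (pref j) (α j)) (mem_univ i)]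
    have heq : ∑ j ∈ univ.erase i, rank (pref j) (β j)
        = ∑ j ∈ univ.erase i, rank (pref j) (α j) := by
      apply Finset.sum_congr rfl
      intro j hj
      rw [hβdef, Function.update_of_ne (Finset.ne_of_mem_erase hj)]
    rw [heq]
    apply Nat.add_lt_add_left
    rw [hβdef, Function.update_self, hpi]
    unfold rank
    omega
  have hle := hOpt β hβA
  unfold avgRank at hle
  have hN' : (0:ℚ) < N := by exact_mod_cast hN
  have : (totalRank pref α : ℚ) ≤ (totalRank pref β : ℚ) := by
    rw [div_le_div_iff_of_pos_right hN'] at hle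
    exact hle
  have := Nat.cast_le (α := ℚ) |>.mp this
  omega


/-- if all other agents report exactly `i`'s true preference `p`,
some rank-minimizing allocation gives `i` the critical object `p.symm kstar`,
of rank `kstar + 1`; hence the worst-case rank under truthful reporting is
exactly `kstar + 1`. -/
theorem truthful_worst_case_exactly_kstar {N M : ℕ} (q : Fin M → ℕ)
    (hq : N ≤ ∑ o, q o) (i : Fin N) (p : Pref M) (kstar : Fin M)
    (hmin : topCap q p kstar < N) (hks : N ≤ topCap q p ((kstar : ℕ) + 1))
    (hcap : ∀ o : Fin M, (p o : ℕ) ≤ (kstar : ℕ) → 1 ≤ q o) :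
    (∃ α ∈ RM q (fun _ => p), α i = p.symm kstar ∧
      rank p (α i) = (kstar : ℕ) + 1) ∧
    worstCase q i p p = (kstar : ℕ) + 1 := by
  have hN : 0 < N := i.pos
  set j0 : Fin N := ⟨topCap q p ↑kstar, hmin⟩ with hj0def
  set e : Fin N ≃ Fin N := Equiv.swap i j0 with hedef
  set α : Fin N → Fin M := fun j =>
    p.symm ⟨fidx q p ↑(e j), fidx_lt (lt_of_lt_of_le (e j).isLt hq)⟩ with hαdef
  have hα : ∀ j, (p (α j) : ℕ) = fidx q p ↑(e j) := by
    intro j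
    simp only [hαdef, Equiv.apply_symm_apply]
  have hRM : α ∈ RM q (fun _ => p) := greedy_opt q p hq e α hα
  have hfid : fidx q p ↑j0 = (kstar : ℕ) := by
    rw [fidx_eq_iff q p hq j0 (kstar : ℕ)]
    constructor
    · exact le_refl _
    · calc (j0 : ℕ) < N := j0.isLt
        _ ≤ topCap q p ((kstar : ℕ) + 1) := hks
  have hαi : α i = p.symm kstar := by
    have hei : e i = j0 := Equiv.swap_apply_left i j0
    simp only [hαdef]
    congr 1
    rw [hei] at *
    exact Fin.ext (by simp [hfid])
  have hrank : rank p (α i) = (kstar : ℕ) + 1 := by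
    rw [hαi]
    simp [rank]
  refine ⟨⟨α, hRM, hαi, hrank⟩, ?_⟩
  unfold worstCase
  have hmem : (kstar : ℕ) + 1 ∈ {r | ∃ pref : Fin N → Pref M, pref i = p ∧
      ∃ α' ∈ RM q pref, r = rank p (α' i)} :=
    ⟨fun _ => p, rfl, α, hRM, hrank.symm⟩
  have hub : ∀ r ∈ {r | ∃ pref : Fin N → Pref M, pref i = p ∧
      ∃ α' ∈ RM q pref, r = rank p (α' i)}, r ≤ (kstar : ℕ) + 1 := by
    rintro r ⟨pref, hpi, α', hRM', rfl⟩
    exact rm_rank_le q i p kstar hks pref hpi α' hRM'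
  exact le_antisymm (csSup_le ⟨_, hmem⟩ hub) (le_csSup ⟨(kstar : ℕ) + 1, hub⟩ hmem)
end

section
/- For every agent i there exists a profile ≻_{−i} of the other agents' preferences such that, when i reports truthfully, the rank-minimizing mechanism has a unique optimal allocation in which every agent (including i) receives her first-choice object. Consequently, min over ≻_{−i} of the best-case rank of i under truthful reporting equals 1, which is weakly better than the best case under any misreport (part (ii) of non-obvious manipulability). -/
open Finset

/-- There exists a capacity-respecting allocation. -/
lemma exists_alloc {N M : ℕ} (q : Fin M → ℕ) (hq : N ≤ ∑ o, q o)
    (hq1 : ∀ o, 1 ≤ q o) : ∃ g : Fin N → Fin M, IsAlloc q g := by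
  have hcard : Fintype.card (Fin N) ≤ Fintype.card (Σ o : Fin M, Fin (q o)) := by
    simpa [Fintype.card_sigma] using hq
  obtain ⟨e⟩ := Function.Embedding.nonempty_of_card_le hcard
  refine ⟨fun j => (e j).1, fun o => ?_⟩
  have hpos : 0 < q o := hq1 o
  have : (univ.filter (fun j => (e j).1 = o)).card ≤ Fintype.card (Fin (q o)) := by
    apply Finset.card_le_card_of_injOn
      (fun j => (⟨((e j).2 : ℕ) % q o, Nat.mod_lt _ hpos⟩ : Fin (q o)))
    · intro j _; exact Finset.mem_univ _
    · intro j hj k hk h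
      simp only [Finset.mem_coe, Finset.mem_filter, Finset.mem_univ, true_and] at hj hk
      have hjlt : ((e j).2 : ℕ) < q o :=
        lt_of_lt_of_le (e j).2.isLt (le_of_eq (congrArg q hj))
      have hklt : ((e k).2 : ℕ) < q o :=
        lt_of_lt_of_le (e k).2.isLt (le_of_eq (congrArg q hk))
      have hval : ((e j).2 : ℕ) = ((e k).2 : ℕ) := by
        have := congrArg Fin.val h
        simpa [Nat.mod_eq_of_lt hjlt, Nat.mod_eq_of_lt hklt] using this
      apply e.injective
      apply Sigma.ext (hj.trans hk.symm)
      rw [Fin.heq_ext_iff (by rw [hj, hk])]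
      exact hval
  simpa using this

/-- There exists a capacity-respecting allocation sending `i` to `o0`. -/
lemma exists_assign {N M : ℕ} (q : Fin M → ℕ) (hq : N ≤ ∑ o, q o)
    (hq1 : ∀ o, 1 ≤ q o) (i : Fin N) (o0 : Fin M) :
    ∃ f : Fin N → Fin M, f i = o0 ∧ IsAlloc q f := by
  obtain ⟨g, hg⟩ := exists_alloc q hq hq1
  by_cases h : ∃ j, g j = o0
  · obtain ⟨j, hj⟩ := h
    refine ⟨g ∘ (Equiv.swap i j), by simp [Equiv.swap_apply_left, hj], fun o => ?_⟩
    have hcardeq : (univ.filter (fun k => (g ∘ (Equiv.swap i j)) k = o)).card =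
        (univ.filter (fun k => g k = o)).card := by
      apply Finset.card_bij (fun k _ => Equiv.swap i j k)
      · intro k hk; simp at hk ⊢; exact hk
      · intro a _ b _ hab; exact (Equiv.swap i j).injective hab
      · intro b hb
        refine ⟨Equiv.swap i j b, ?_, by simp⟩
        simp at hb ⊢; simpa using hb
    rw [hcardeq]; exact hg o
  · push_neg at h
    refine ⟨Function.update g i o0, by simp, fun o => ?_⟩
    by_cases ho : o = o0
    · rw [ho]
      have hsub : (univ.filter (fun k => Function.update g i o0 k = o0)) ⊆ {i} := by
        intro k hk
        simp only [Finset.mem_filter, Finset.mem_univ, true_and] at hk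
        simp only [Finset.mem_singleton]
        by_contra hki
        rw [Function.update_of_ne hki] at hk
        exact h k hk
      calc _ ≤ ({i} : Finset (Fin N)).card := Finset.card_le_card hsub
        _ ≤ q o0 := by simpa using hq1 o0
    · have hsub : (univ.filter (fun k => Function.update g i o0 k = o)) ⊆
          (univ.filter (fun k => g k = o)) := by
        intro k hk
        simp only [Finset.mem_filter, Finset.mem_univ, true_and] at hk ⊢
        rcases eq_or_ne k i with rfl | hki
        · simp at hk; exact absurd hk.symm ho
        · rwa [Function.update_of_ne hki] at hk
      exact le_trans (Finset.card_le_card hsub) (hg o)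

/-- Key lemma: for any report `p` of agent `i` there is a counterpart profile
at which the rank-minimizing outcome is unique and gives everyone her first
choice. -/
lemma rm_key {N M : ℕ} (q : Fin M → ℕ) (hq : N ≤ ∑ o, q o) (hq1 : ∀ o, 1 ≤ q o)
    (i : Fin N) (p : Pref M) :
    ∃ pref : Fin N → Pref M, pref i = p ∧
      ∃ α : Fin N → Fin M, RM q pref = {α} ∧ ∀ j, rank (pref j) (α j) = 1 := by
  have hN : 0 < N := i.pos
  have hM : 0 < M := by
    rcases Nat.eq_zero_or_pos M with rfl | h
    · simp at hq; omega
    · exact h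
  haveI : NeZero M := ⟨hM.ne'⟩
  obtain ⟨f, hfi, hf⟩ := exists_assign q hq hq1 i (p.symm 0)
  set pref : Fin N → Pref M := fun j => p.trans (Equiv.swap (p (f j)) 0) with hpref
  have hrank1 : ∀ j, rank (pref j) (f j) = 1 := by
    intro j; simp [rank, hpref, Equiv.swap_apply_left]
  have hprefi : pref i = p := by
    have h0 : p (f i) = 0 := by rw [hfi]; simp
    ext x
    simp [hpref, h0]
  have htot : totalRank pref f = N := by
    simp [totalRank, hrank1]
  have hge : ∀ β : Fin N → Fin M, (N : ℕ) ≤ totalRank pref β := by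
    intro β
    calc N = ∑ _j : Fin N, 1 := by simp
      _ ≤ _ := Finset.sum_le_sum (fun j _ => by simp [rank])
  have hmem : f ∈ RM q pref := by
    refine ⟨hf, fun β hβ => ?_⟩
    rw [avgRank, avgRank, div_le_div_iff_of_pos_right (by exact_mod_cast hN)]
    exact_mod_cast htot.le.trans (hge β)
  refine ⟨pref, hprefi, f, ?_, hrank1⟩
  ext β
  constructor
  · rintro ⟨hβa, hβm⟩
    have h1 : totalRank pref β ≤ N := by
      have h1' := hβm f hf
      rw [avgRank, avgRank, div_le_div_iff_of_pos_right (by exact_mod_cast hN)] at h1'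
      have h1'' : totalRank pref β ≤ totalRank pref f := by exact_mod_cast h1'
      exact h1''.trans htot.le
    have h2 : totalRank pref β = N := le_antisymm h1 (hge β)
    have h3 : ∀ j ∈ (univ : Finset (Fin N)), (1 : ℕ) = rank (pref j) (β j) := by
      rw [← Finset.sum_eq_sum_iff_of_le (fun j _ => by simp [rank])]
      simpa [totalRank] using h2.symm
    have h4 : ∀ j, β j = f j := by
      intro j
      have hb : (pref j) (β j) = 0 := by
        have hb' := (h3 j (Finset.mem_univ j)).symm
        have hv : ((pref j) (β j) : ℕ) = 0 := by simp only [rank] at hb'; omega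
        exact Fin.ext (by simpa using hv)
      have hfj : (pref j) (f j) = 0 := by
        have hfj' := hrank1 j
        have hv : ((pref j) (f j) : ℕ) = 0 := by simp only [rank] at hfj'; omega
        exact Fin.ext (by simpa using hv)
      exact (pref j).injective (hb.trans hfj.symm)
    exact funext h4
  · rintro rfl; exact hmem

/-- part (ii) of non-obvious manipulability: for every agent `i`
with true preference `p` there is a counterpart profile at which the truthful
rank-minimizing outcome is unique and gives every agent her first choice;
consequently the best-case rank under truthful reporting equals 1, which is
weakly better than the best case under any misreport. -/
theorem rm_truth_weakly_optimizes_best_case {N M : ℕ} (q : Fin M → ℕ)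
    (hq : N ≤ ∑ o, q o) (hq1 : ∀ o, 1 ≤ q o) (i : Fin N) (p : Pref M) :
    (∃ pref : Fin N → Pref M, pref i = p ∧
      ∃ α : Fin N → Fin M, RM q pref = {α} ∧ ∀ j, rank (pref j) (α j) = 1) ∧
    bestCase q i p p = 1 ∧
    (∀ p' : Pref M, bestCase q i p p ≤ bestCase q i p p') := by
  obtain ⟨pref, hpi, α, hRM, hr1⟩ := rm_key q hq hq1 i p
  have h1mem : 1 ∈ {r | ∃ pref : Fin N → Pref M, pref i = p ∧
      ∃ α ∈ RM q pref, r = rank p (α i)} := by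
    refine ⟨pref, hpi, α, by rw [hRM]; rfl, ?_⟩
    rw [← hpi]; exact (hr1 i).symm
  have hlow : ∀ (p' : Pref M) (r : ℕ), r ∈ {r | ∃ pref : Fin N → Pref M, pref i = p' ∧
      ∃ α ∈ RM q pref, r = rank p (α i)} → 1 ≤ r := by
    rintro p' r ⟨pref', _, α', _, rfl⟩
    simp [rank]
  have hbest : bestCase q i p p = 1 :=
    le_antisymm (Nat.sInf_le h1mem) (le_csInf ⟨1, h1mem⟩ (hlow p))
  refine ⟨⟨pref, hpi, α, hRM, hr1⟩, hbest, ?_⟩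
  intro p'
  obtain ⟨pref', hpi', α', hRM', hr1'⟩ := rm_key q hq hq1 i p'
  have hne : (rank p (α' i)) ∈ {r | ∃ pref : Fin N → Pref M, pref i = p' ∧
      ∃ α ∈ RM q pref, r = rank p (α i)} :=
    ⟨pref', hpi', α', by rw [hRM']; rfl, rfl⟩
  have h1le : (1 : ℕ) ≤ bestCase q i p p' := le_csInf ⟨_, hne⟩ (hlow p')
  rw [hbest]; exact h1le
end
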